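/- In any one-page PQ-layout of an edge-weighted cycle ⟨C,w⟩, the vertex that is last (rightmost) in the linear ordering is incident to an edge of maximum weight among the edges of C. -/

import Mathlib

/-!
Among the maximum-weight edges pick one, `e`, whose right endpoint `v` lies furthest right. If `v`
were not the last vertex, then `v` would lie strictly between the other endpoint of `e` and the last
vertex; both lie on the path obtained by deleting `v` from the cycle, so some edge of that path
jumps over `v`. The layout condition makes that edge at least as heavy as `e`, hence also of
maximum weight, while its right endpoint lies further right than `v`.
-/

open Function

theorem Finite.exists_max_lex {ι α β : Type*} [Finite ι] [Nonempty ι] [LinearOrder α]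
    [LinearOrder β] (w : ι → α) (g : ι → β) :
    ∃ i, (∀ j, w j ≤ w i) ∧ ∀ j, w j = w i → g j ≤ g i := by
  obtain ⟨i, hi⟩ := Finite.exists_max fun i => toLex (w i, g i)
  refine ⟨i, fun j => ?_, fun j hj => ?_⟩
  · rcases Prod.Lex.toLex_le_toLex.1 (hi j) with h | h
    exacts [h.le, h.1.le]
  · rcases Prod.Lex.toLex_le_toLex.1 (hi j) with h | h
    exacts [absurd hj h.ne, h.2]

theorem Nat.exists_not_iff_succ {p : ℕ → Prop} {a b : ℕ} (hab : a ≤ b) (h : ¬(p a ↔ p b)) :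
    ∃ t, a ≤ t ∧ t < b ∧ ¬(p t ↔ p (t + 1)) := by
  by_contra! hcon
  refine h ?_
  clear h
  induction b, hab using Nat.le_induction with
  | base => rfl
  | succ k hak ih =>
    exact (ih fun t hat htk => hcon t hat (by omega)).trans (hcon k hak (by omega))

theorem min_lt_and_lt_max_of_not_iff {α : Type*} [LinearOrder α] {a b c : α} (ha : a ≠ c)
    (hb : b ≠ c) (h : ¬(a < c ↔ b < c)) : min a b < c ∧ c < max a b := by
  grind [min_lt_iff, lt_max_iff]

namespace Fin

open Fin.NatCast

variable {n : ℕ} [NeZero n] {α : Type*} [LinearOrder α] {f : Fin n → α}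

theorem exists_edge_spanning_vertex (hf : Injective f) {a v b : Fin n} (ha : f a < f v)
    (hb : f v < f b) : ∃ j, min (f j) (f (j + 1)) < f v ∧ f v < max (f j) (f (j + 1)) := by
  -- `k ↦ v + k` for `0 < k < n` walks along the cycle with `v` deleted.
  have walk_ne : ∀ k : ℕ, 0 < k → k < n → f (v + (k : Fin n)) ≠ f v := fun k hk0 hkn h =>
    (Nat.eq_zero_of_dvd_of_lt (Fin.natCast_eq_zero.1 (add_eq_left.1 (hf h))) hkn).not_gt hk0
  have walk_val : ∀ x : Fin n, v + (((x - v : Fin n) : ℕ) : Fin n) = x := fun x => by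
    rw [Fin.cast_val_eq_self, add_sub_cancel]
  set p : ℕ → Prop := fun k => f (v + (k : Fin n)) < f v
  have crossing : ∀ t : ℕ, 0 < t → t + 1 < n → ¬(p t ↔ p (t + 1)) →
      ∃ j, min (f j) (f (j + 1)) < f v ∧ f v < max (f j) (f (j + 1)) := by
    intro t ht0 htn hne
    have h₁ := walk_ne t ht0 (by omega)
    have h₂ := walk_ne (t + 1) (by omega) htn
    simp only [p, Nat.cast_succ, ← add_assoc] at h₂ hne
    exact ⟨v + t, min_lt_and_lt_max_of_not_iff h₁ h₂ hne⟩
  set ka := ((a - v : Fin n) : ℕ)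
  set kb := ((b - v : Fin n) : ℕ)
  have hka : 0 < ka := Nat.pos_of_ne_zero fun h =>
    ha.ne (congrArg f (sub_eq_zero.1 (Fin.val_eq_zero_iff.1 h)))
  have hkb : 0 < kb := Nat.pos_of_ne_zero fun h =>
    hb.ne' (congrArg f (sub_eq_zero.1 (Fin.val_eq_zero_iff.1 h)))
  have hab : ¬(p ka ↔ p kb) := by
    simp only [p, ka, kb, walk_val]
    exact fun h => hb.not_gt (h.1 ha)
  rcases le_total ka kb with hle | hle
  · obtain ⟨t, hat, htb, ht⟩ := Nat.exists_not_iff_succ hle hab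
    exact crossing t (by omega) (by omega) ht
  · obtain ⟨t, hbt, hta, ht⟩ := Nat.exists_not_iff_succ hle (mt Iff.symm hab)
    exact crossing t (by omega) (by omega) ht

theorem exists_edge_spanning_edge (hf : Injective f) {i b : Fin n}
    (hb : max (f i) (f (i + 1)) < f b) :
    ∃ j, min (f j) (f (j + 1)) < max (f i) (f (i + 1)) ∧
      max (f i) (f (i + 1)) < max (f j) (f (j + 1)) := by
  rcases lt_trichotomy (f i) (f (i + 1)) with h | h | h
  · rw [max_eq_right h.le] at hb ⊢
    exact exists_edge_spanning_vertex hf h hb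
  · have hn : n = 1 := Fin.one_eq_zero_iff.1 (left_eq_add.1 (hf h))
    subst hn
    exact absurd (le_max_left _ _) (Subsingleton.elim b i ▸ hb).not_ge
  · rw [max_eq_left h.le] at hb ⊢
    exact exists_edge_spanning_vertex hf h hb

end Fin

/-- **The rightmost vertex of a one-page layout of a cycle is incident to a
maximum-weight edge.**  The cycle on `Fin n` has edges `{i, i+1}` (mod `n`) of
weight `w i`.  If `f` is an injective spine ordering admitting a one-page
PQ-layout (no forbidden configuration) and `z` is the rightmost vertex, then some
edge incident to `z` has maximum weight among all edges of the cycle. -/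
theorem cycle_last_vertex_heavy (n : ℕ) (hn : 3 ≤ n) (w : Fin n → ℝ)
    (f : Fin n → ℕ) (hf : Function.Injective f)
    (hvalid : ∀ i j : Fin n,
      min (f j) (f (j + (⟨1, by omega⟩ : Fin n))) < max (f i) (f (i + (⟨1, by omega⟩ : Fin n))) →
      max (f i) (f (i + (⟨1, by omega⟩ : Fin n))) < max (f j) (f (j + (⟨1, by omega⟩ : Fin n))) →
      w i ≤ w j)
    (z : Fin n) (hz : ∀ v, f v ≤ f z) :
    ∃ i : Fin n, (i = z ∨ i + (⟨1, by omega⟩ : Fin n) = z) ∧ ∀ j, w j ≤ w i := by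
  have : NeZero n := ⟨by omega⟩
  have hone : (⟨1, by omega⟩ : Fin n) = 1 := Fin.ext (Nat.mod_eq_of_lt (by omega)).symm
  simp only [hone] at hvalid ⊢
  obtain ⟨i, hi_heavy, hi_right⟩ :=
    Finite.exists_max_lex w fun i => max (f i) (f (i + 1))
  refine ⟨i, ?_, hi_heavy⟩
  have hi_last : max (f i) (f (i + 1)) = f z := by
    refine le_antisymm (max_le (hz _) (hz _)) (not_lt.1 fun hlt => ?_)
    obtain ⟨j, hj_lo, hj_hi⟩ := Fin.exists_edge_spanning_edge hf hlt
    have hj_heavy : w j = w i := le_antisymm (hi_heavy j) (hvalid i j hj_lo hj_hi)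
    exact (hi_right j hj_heavy).not_gt hj_hi
  rcases max_choice (f i) (f (i + 1)) with h | h
  · exact Or.inl (hf (h.symm.trans hi_last))
  · exact Or.inr (hf (h.symm.trans hi_last))
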